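/- arXiv:2412.20782 — 2 statements merged into one kernel-verified Lean document; each statement's English description precedes it below -/
import Mathlib

section
/- Let $(\Omega,\mathcal{F},\mathbb{F})$ be a filtered space, $(\Omega',\mathcal{G},\mathbb{P})$ a probability space, and $A$ a Polish space. If $X:[0,T]\times\Omega\times\Omega'\to A$ is $\mathbb{F}\otimes\mathcal{G}$-predictable (predictable for the filtration $(\mathcal{F}_t\otimes\mathcal{G})_t$ on $\Omega\times\Omega'$), then the process $Y:[0,T]\times\Omega\to L^0(\Omega',\mathcal{G},\mathbb{P};A)$ defined by $Y_t(\omega)=[X_t(\omega,\cdot)]$ (the $\mathbb{P}$-equivalence class) is $\mathbb{F}$-predictable, where $L^0(\Omega',\mathcal{G},\mathbb{P};A)$ is equipped with the topology of convergence in probability. -/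
/-!
Reassociating `((t, ω), ω') ↦ (t, (ω, ω'))` is measurable from `predSigma T F ⊗ 𝒢` to the
predictable σ-algebra of the filtration `(𝓕_t ⊗ 𝒢)_t`: for a generator `J × D` of the latter
this holds when `D = B × C` is a rectangle, and the sets `D` for which it holds form a
σ-algebra. So `X`, reassociated, is jointly measurable on `(ℝ × Ω, predSigma T F) × Ω'`, and by
Fubini so is `(t, ω) ↦ 𝔼[ρ(f, X_t(ω, ·))]` for each `f ∈ L⁰`. The preimages under `Y` of the
balls generating `L0sigma μ A` are sublevel sets of exactly these maps.
-/

open Set MeasureTheory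

/-- The predictable σ-algebra on `[0,T] × Ω` (viewed inside `ℝ × Ω`) associated with a
filtration `F`. -/
def predSigma {Ω : Type*} (T : ℝ) (F : ℝ → MeasurableSpace Ω) : MeasurableSpace (ℝ × Ω) :=
  MeasurableSpace.generateFrom
    ({S | ∃ t₁ t₂ : ℝ, 0 ≤ t₁ ∧ t₁ < t₂ ∧ t₂ ≤ T ∧
        ∃ B : Set Ω, MeasurableSet[F t₁] B ∧ S = Ioc t₁ t₂ ×ˢ B} ∪
     {S | ∃ B : Set Ω, MeasurableSet[F 0] B ∧ S = ({(0 : ℝ)} : Set ℝ) ×ˢ B})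

/-- The Borel σ-algebra of the metric `ρ̂(f,g) = 𝔼[ρ(f,g)]` of convergence in probability
on `L⁰(Ω',𝒢,ℙ;A)` (realised as the space `Ω' →ₘ[μ] A` of a.e.-equivalence classes),
generated by the open balls of `ρ̂`. -/
noncomputable def L0sigma {Ω' : Type*} [MeasurableSpace Ω'] (μ : MeasureTheory.Measure Ω')
    (A : Type*) [MetricSpace A] : MeasurableSpace (Ω' →ₘ[μ] A) :=
  MeasurableSpace.generateFrom
    {s | ∃ (f : Ω' →ₘ[μ] A) (r : ℝ), s = {g | ∫ ω, dist (f ω) (g ω) ∂μ < r}}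

theorem measurableSet_prodAssoc_preimage_prod {α β γ : Type*} {m : MeasurableSpace (α × β)}
    {mβ : MeasurableSpace β} [mγ : MeasurableSpace γ] {J : Set α}
    (hJ : ∀ B, MeasurableSet[mβ] B → MeasurableSet[m] (J ×ˢ B))
    {D : Set (β × γ)} (hD : MeasurableSet[mβ.prod mγ] D) :
    MeasurableSet[m.prod mγ] (Equiv.prodAssoc α β γ ⁻¹' (J ×ˢ D)) := by
  have hrect (B : Set β) (C : Set γ) :
      Equiv.prodAssoc α β γ ⁻¹' (J ×ˢ (B ×ˢ C)) = (J ×ˢ B) ×ˢ C := by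
    ext; simp [and_assoc]
  replace hD : MeasurableSet[.generateFrom (image2 (· ×ˢ ·) {B | MeasurableSet[mβ] B}
      {C : Set γ | MeasurableSet C})] D := by
    rwa [generateFrom_prod]
  induction D, hD using MeasurableSpace.generateFrom_induction with
  | hC D hD =>
    obtain ⟨B, hB, C, hC, rfl⟩ := hD
    rw [hrect]
    exact (hJ B hB).prod hC
  | empty => simp
  | compl D _ ih =>
    have huniv : MeasurableSet[m.prod mγ] (Equiv.prodAssoc α β γ ⁻¹' (J ×ˢ univ)) := by
      rw [← univ_prod_univ, hrect]
      exact (hJ univ MeasurableSet.univ).prod MeasurableSet.univ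
    convert huniv.diff ih using 1
    ext; simp; tauto
  | iUnion D _ ih =>
    rw [prod_iUnion, preimage_iUnion]
    exact MeasurableSet.iUnion ih

theorem measurableSet_predSigma_Ioc_prod {Ω : Type*} {T t₁ t₂ : ℝ} {F : ℝ → MeasurableSpace Ω}
    (h0 : 0 ≤ t₁) (h12 : t₁ < t₂) (h2T : t₂ ≤ T) {B : Set Ω} (hB : MeasurableSet[F t₁] B) :
    MeasurableSet[predSigma T F] (Ioc t₁ t₂ ×ˢ B) :=
  MeasurableSpace.measurableSet_generateFrom (Or.inl ⟨t₁, t₂, h0, h12, h2T, B, hB, rfl⟩)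

theorem measurableSet_predSigma_zero_prod {Ω : Type*} {T : ℝ} {F : ℝ → MeasurableSpace Ω}
    {B : Set Ω} (hB : MeasurableSet[F 0] B) :
    MeasurableSet[predSigma T F] ({0} ×ˢ B) :=
  MeasurableSpace.measurableSet_generateFrom (Or.inr ⟨B, hB, rfl⟩)

theorem measurable_prodAssoc_predSigma {Ω Ω' : Type*} [mΩ' : MeasurableSpace Ω'] (T : ℝ)
    (F : ℝ → MeasurableSpace Ω) :
    @Measurable _ _ ((predSigma T F).prod mΩ') (predSigma T fun t => (F t).prod mΩ')
      (Equiv.prodAssoc ℝ Ω Ω') := by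
  refine @measurable_generateFrom _ _ ((predSigma T F).prod mΩ') _ _ ?_
  rintro S (⟨t₁, t₂, h0, h12, h2T, D, hD, rfl⟩ | ⟨D, hD, rfl⟩)
  · exact measurableSet_prodAssoc_preimage_prod
      (fun _ hB ↦ measurableSet_predSigma_Ioc_prod h0 h12 h2T hB) hD
  · exact measurableSet_prodAssoc_preimage_prod (fun _ ↦ measurableSet_predSigma_zero_prod) hD

theorem measurable_L0sigma_of_ae_eq {β Ω' A : Type*} [mβ : MeasurableSpace β]
    [MeasurableSpace Ω'] {μ : Measure Ω'} [SFinite μ] [MetricSpace A] [SecondCountableTopology A]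
    [MeasurableSpace A] [BorelSpace A] {Z : β × Ω' → A} (hZ : Measurable Z) {Y : β → Ω' →ₘ[μ] A}
    (hY : ∀ b, Y b =ᵐ[μ] fun ω' ↦ Z (b, ω')) :
    @Measurable _ _ _ (L0sigma μ A) Y := by
  refine measurable_generateFrom ?_
  rintro s ⟨f, r, rfl⟩
  have hdist : StronglyMeasurable fun b ↦ ∫ ω', dist (f ω') (Z (b, ω')) ∂μ :=
    ((f.measurable.comp measurable_snd).dist hZ).stronglyMeasurable.integral_prod_right'
  have hpre : Y ⁻¹' {g | ∫ ω', dist (f ω') (g ω') ∂μ < r}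
      = (fun b ↦ ∫ ω', dist (f ω') (Z (b, ω')) ∂μ) ⁻¹' Iio r := by
    ext b
    simp only [mem_preimage, mem_ofPred_eq, mem_Iio]
    rw [integral_congr_ae ((hY b).mono fun ω' h ↦ by rw [h])]
  rw [hpre]
  exact hdist.measurable measurableSet_Iio

theorem stmt1_general {Ω Ω' A : Type*} [MetricSpace A] [PolishSpace A] [MeasurableSpace A]
    [BorelSpace A]
    [mΩ' : MeasurableSpace Ω'] (μ : MeasureTheory.Measure Ω') [IsProbabilityMeasure μ]
    (T : ℝ) (F : ℝ → MeasurableSpace Ω)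
    (X : ℝ × (Ω × Ω') → A)
    (hX : Measurable[predSigma T (fun t => (F t).prod mΩ')] X)
    (Y : ℝ × Ω → (Ω' →ₘ[μ] A))
    (hY : ∀ t ω, (Y (t, ω) : Ω' → A) =ᵐ[μ] fun ω' => X (t, (ω, ω'))) :
    @Measurable _ _ (predSigma T F) (L0sigma μ A) Y :=
  measurable_L0sigma_of_ae_eq (mβ := predSigma T F)
    (hX.comp (measurable_prodAssoc_predSigma T F)) fun b ↦ hY b.1 b.2

/-- If `X : [0,T] × Ω × Ω' → A` is predictable for the filtration `(𝒻_t ⊗ 𝒢)_t`, then the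
process `Y : [0,T] × Ω → L⁰(Ω',𝒢,ℙ;A)` of equivalence classes `Y_t(ω) = [X_t(ω,·)]` is
`𝔽`-predictable, where `L⁰` carries (the Borel σ-algebra of) the metric
`ρ̂(φ¹,φ²) = 𝔼[ρ(φ¹,φ²)]` of convergence in probability. -/
theorem stmt1 {Ω Ω' A : Type*} [MetricSpace A] [PolishSpace A] [MeasurableSpace A]
    [BorelSpace A] (hρ : ∀ x y : A, dist x y < 1)
    [mΩ' : MeasurableSpace Ω'] (μ : MeasureTheory.Measure Ω') [IsProbabilityMeasure μ]
    (T : ℝ) (F : ℝ → MeasurableSpace Ω)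
    (X : ℝ × (Ω × Ω') → A)
    (hX : Measurable[predSigma T (fun t => (F t).prod mΩ')] X)
    (Y : ℝ × Ω → (Ω' →ₘ[μ] A))
    (hY : ∀ t ω, (Y (t, ω) : Ω' → A) =ᵐ[μ] fun ω' => X (t, (ω, ω'))) :
    @Measurable _ _ (predSigma T F) (L0sigma μ A) Y :=
  stmt1_general (mΩ' := mΩ') μ T F X hX Y hY
end

section
/- Let $(\Omega,\mathcal{F},\mathbb{F})$ be a filtered space and $(\Omega',\mathcal{G},\mathbb{G},\mathbb{P})$ a filtered probability space with $\mathcal{G}$ countably generated. Let $X:[0,T]\times\Omega\to L^1(\Omega',\mathcal{G},\mathbb{P};[0,1])$ be jointly $(\mathcal{B}([0,T])\otimes\mathcal{F})$-measurable, $\mathbb{F}$-adapted, and satisfy $X_t(\omega)\in L^1(\Omega',\mathcal{G}_t,\mathbb{P};[0,1])$ for all $(t,\omega)$. Then there exists a jointly measurable, $\mathbb{F}\otimes\mathbb{G}$-adapted process $Y:[0,T]\times\Omega\times\Omega'\to[0,1]$ with $Y_t(\omega,\cdot)=X_t(\omega)$ in $L^1(\Omega',\mathcal{G},\mathbb{P};[0,1])$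 for every $(t,\omega)\in[0,T]\times\Omega$. -/
open Set MeasureTheory Filter
open scoped Classical ENNReal NNReal Topology

noncomputable section AdaptedSelection

namespace AdaptedSel

def clamp (x : ℝ) : ℝ := max 0 (min 1 x)

lemma clamp_mem_Icc (x : ℝ) : clamp x ∈ Icc (0:ℝ) 1 :=
  ⟨le_max_left _ _, max_le (by norm_num) (min_le_left _ _)⟩

lemma clamp_of_mem {x : ℝ} (hx : x ∈ Icc (0:ℝ) 1) : clamp x = x := by
  simp only [clamp, min_eq_right hx.2, max_eq_right hx.1]

lemma continuous_clamp : Continuous clamp :=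
  continuous_const.max (continuous_const.min continuous_id)

lemma measurable_clamp : Measurable clamp := continuous_clamp.measurable

def eLimPt (u : ℕ → ℝ) : ℝ :=
  (Filter.limsup (fun n => ENNReal.ofReal (u n)) Filter.atTop).toReal

lemma eLimPt_meas {δ : Type*} {m : MeasurableSpace δ} {u : ℕ → δ → ℝ}
    (hu : ∀ n, Measurable[m] (u n)) :
    Measurable[m] fun x => eLimPt (fun n => u n x) :=
  ENNReal.measurable_toReal.comp
    (Measurable.limsup (fun n => ENNReal.measurable_ofReal.comp (hu n)))

lemma eLimPt_of_tendsto {u : ℕ → ℝ} {y : ℝ} (hy : 0 ≤ y)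
    (h : Tendsto u atTop (𝓝 y)) : eLimPt u = y := by
  have h2 : Tendsto (fun n => ENNReal.ofReal (u n)) atTop (𝓝 (ENNReal.ofReal y)) :=
    (ENNReal.continuous_ofReal.tendsto y).comp h
  rw [eLimPt, h2.limsup_eq, ENNReal.toReal_ofReal hy]

lemma eLimPt_nonneg (u : ℕ → ℝ) : 0 ≤ eLimPt u := ENNReal.toReal_nonneg

lemma eLimPt_mem_Icc {u : ℕ → ℝ} (h : ∀ n, u n ≤ 1) : eLimPt u ∈ Icc (0:ℝ) 1 := by
  refine ⟨ENNReal.toReal_nonneg, ?_⟩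
  have h1 : limsup (fun n => ENNReal.ofReal (u n)) atTop ≤ 1 := by
    refine limsup_le_of_le (by isBoundedDefault) (Eventually.of_forall fun n => ?_)
    simpa using ENNReal.ofReal_le_ofReal (h n)
  calc (limsup (fun n => ENNReal.ofReal (u n)) atTop).toReal
      ≤ (1 : ℝ≥0∞).toReal := ENNReal.toReal_mono (by simp) h1
    _ = 1 := by simp

lemma measurable_cases {α γ δ : Type*} {mα : MeasurableSpace α} {mγ : MeasurableSpace γ}
    (v : α → δ) (hvc : (Set.range v).Countable)
    (hv : ∀ d, MeasurableSet[mα] (v ⁻¹' {d}))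
    (c : δ → α → γ) (hc : ∀ d, Measurable[mα] (c d)) :
    Measurable[mα] (fun a => c (v a) a) := by
  intro s hs
  have heq : (fun a => c (v a) a) ⁻¹' s = ⋃ d ∈ Set.range v, (v ⁻¹' {d}) ∩ (c d ⁻¹' s) := by
    ext a
    simp only [mem_preimage, mem_iUnion, mem_inter_iff, mem_singleton_iff, exists_prop]
    constructor
    · intro h; exact ⟨v a, ⟨a, rfl⟩, rfl, h⟩
    · rintro ⟨d, -, rfl, h⟩; exact h
  rw [heq]
  exact MeasurableSet.biUnion hvc fun d _ => (hv d).inter (hc d hs)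

lemma measurable_patch {α β γ : Type*} {mα : MeasurableSpace α} {mβ : MeasurableSpace β}
    {mγ : MeasurableSpace γ} [MeasurableSingletonClass α]
    {D : Set α} (hD : D.Countable) (c : α → β → γ) (hc : ∀ t ∈ D, Measurable (c t))
    {l : α × β → γ} (hl : Measurable l) :
    Measurable (fun p : α × β => if p.1 ∈ D then c p.1 p.2 else l p) := by
  intro s hs
  have heq : (fun p : α × β => if p.1 ∈ D then c p.1 p.2 else l p) ⁻¹' s
      = ((l ⁻¹' s) \ (D ×ˢ (univ : Set β))) ∪ ⋃ t ∈ D, ({t} ×ˢ (c t ⁻¹' s)) := by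
    ext ⟨t, b⟩
    by_cases ht : t ∈ D <;>
      simp [ht, Set.mem_preimage, Set.mem_prod]
  rw [heq]
  refine MeasurableSet.union ((hl hs).diff (hD.measurableSet.prod MeasurableSet.univ)) ?_
  exact MeasurableSet.biUnion hD fun t ht =>
    (measurableSet_singleton t).prod (hc t ht hs)

lemma measurable_of_rat {δ : Type*} {m : MeasurableSpace δ} {f : δ → ℝ}
    (h : ∀ q : ℚ, MeasurableSet[m] {x | (q:ℝ) < f x}) : Measurable[m] f := by
  refine measurable_of_Ioi fun x => ?_
  have : f ⁻¹' Ioi x = ⋃ q : ℚ, ⋃ (_ : x < (q:ℝ)), {y | (q:ℝ) < f y} := by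
    ext y
    simp only [mem_preimage, mem_Ioi, mem_iUnion, mem_setOf_eq, exists_prop]
    constructor
    · intro hy
      obtain ⟨q, hq1, hq2⟩ := exists_rat_btwn hy
      exact ⟨q, hq1, hq2⟩
    · rintro ⟨q, hq1, hq2⟩; exact hq1.trans hq2
  rw [this]
  exact MeasurableSet.iUnion fun q => MeasurableSet.iUnion fun _ => h q



variable {Ω' : Type*} {mΩ' : MeasurableSpace Ω'} (μ : Measure Ω')

def vFn (C : ℕ → Set Ω') (n : ℕ) (x : Ω') : Fin n → Bool := fun i => decide (x ∈ C i)

def bAtom (C : ℕ → Set Ω') (n : ℕ) (β : Fin n → Bool) : Set Ω' :=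
  ⋂ i : Fin n, (if β i then C i else (C i)ᶜ)

lemma mem_bAtom_iff {C : ℕ → Set Ω'} {n : ℕ} {β : Fin n → Bool} {x : Ω'} :
    x ∈ bAtom C n β ↔ vFn C n x = β := by
  simp only [bAtom, mem_iInter]
  constructor
  · intro h; funext i; specialize h i
    show decide (x ∈ C i) = β i
    by_cases hb : β i = true
    · rw [if_pos hb] at h; rw [hb]; exact decide_eq_true h
    · have hb' : β i = false := by simpa using hb
      rw [if_neg hb] at h; rw [hb']
      exact decide_eq_false h
  · rintro rfl i
    show x ∈ if (decide (x ∈ C i) = true) then C i else (C i)ᶜ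
    by_cases hx : x ∈ C i <;> simp [hx]

lemma bAtom_eq_preimage {C : ℕ → Set Ω'} {n : ℕ} {β : Fin n → Bool} :
    bAtom C n β = vFn C n ⁻¹' {β} := by
  ext x; simp [mem_bAtom_iff]

lemma measurableSet_bAtom {m : MeasurableSpace Ω'} {C : ℕ → Set Ω'} {n : ℕ}
    (hC : ∀ i : Fin n, MeasurableSet[m] (C i)) (β : Fin n → Bool) :
    MeasurableSet[m] (bAtom C n β) := by
  refine MeasurableSet.iInter fun i => ?_
  by_cases hb : β i
  · simpa [hb] using hC i
  · simpa [hb] using (hC i).compl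

def avgOn (A : Set Ω') (f : Ω' → ℝ) : ℝ := (∫ x in A, f x ∂μ) / (μ A).toReal

def cApp (C : ℕ → Set Ω') (n : ℕ) (f : Ω' → ℝ) (x : Ω') : ℝ :=
  ∑ β : Fin n → Bool, (bAtom C n β).indicator (fun _ => avgOn μ (bAtom C n β) f) x

lemma cApp_eq (C : ℕ → Set Ω') (n : ℕ) (f : Ω' → ℝ) (x : Ω') :
    cApp μ C n f x = avgOn μ (bAtom C n (vFn C n x)) f := by
  rw [cApp, Finset.sum_eq_single (vFn C n x)]
  · rw [indicator_of_mem (mem_bAtom_iff.mpr rfl)]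
  · intro β _ hβ
    exact indicator_of_notMem (fun hm => hβ (mem_bAtom_iff.mp hm).symm) _
  · intro h; exact absurd (Finset.mem_univ _) h

lemma avgOn_mem_Icc [IsFiniteMeasure μ] {A : Set Ω'} {f : Ω' → ℝ}
    (hf : Integrable f μ) (h01 : ∀ᵐ x ∂μ, f x ∈ Icc (0:ℝ) 1) :
    avgOn μ A f ∈ Icc (0:ℝ) 1 := by
  by_cases h0 : μ A = 0
  · have : μ.restrict A = 0 := Measure.restrict_eq_zero.mpr h0
    simp [avgOn, this]
  · have hpos : 0 < (μ A).toReal :=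
      ENNReal.toReal_pos h0 (measure_ne_top μ A)
    have hnum0 : 0 ≤ ∫ x in A, f x ∂μ :=
      integral_nonneg_of_ae (ae_restrict_of_ae (h01.mono fun x hx => hx.1))
    have hnum1 : ∫ x in A, f x ∂μ ≤ (μ A).toReal := by
      have : ∫ x in A, f x ∂μ ≤ ∫ _ in A, (1:ℝ) ∂μ := by
        refine integral_mono_ae hf.integrableOn (integrable_const _) ?_
        exact ae_restrict_of_ae (h01.mono fun x hx => hx.2)
      simpa [setIntegral_const, measureReal_def] using this
    exact ⟨div_nonneg hnum0 hpos.le, (div_le_one hpos).mpr hnum1⟩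

lemma cApp_mem_Icc [IsFiniteMeasure μ] {C : ℕ → Set Ω'} {n : ℕ} {f : Ω' → ℝ}
    (hf : Integrable f μ) (h01 : ∀ᵐ x ∂μ, f x ∈ Icc (0:ℝ) 1) (x : Ω') :
    cApp μ C n f x ∈ Icc (0:ℝ) 1 := by
  rw [cApp_eq]; exact avgOn_mem_Icc μ hf h01

lemma measurable_cApp {m : MeasurableSpace Ω'} {C : ℕ → Set Ω'} {n : ℕ} {f : Ω' → ℝ}
    (hC : ∀ i : Fin n, MeasurableSet[m] (C i)) :
    Measurable[m] (cApp μ C n f) := by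
  refine Finset.measurable_sum _ fun β _ => ?_
  exact Measurable.indicator measurable_const (measurableSet_bAtom hC β)

lemma integrable_cApp [IsFiniteMeasure μ] {C : ℕ → Set Ω'} {n : ℕ} {f : Ω' → ℝ}
    (hC : ∀ i : Fin n, MeasurableSet (C i)) :
    Integrable (cApp μ C n f) μ := by
  refine integrable_finset_sum _ fun β _ => ?_
  exact (integrable_const _).indicator (measurableSet_bAtom hC β)

def Fσ (C : ℕ → Set Ω') (n : ℕ) : MeasurableSpace Ω' :=
  MeasurableSpace.generateFrom {s | ∃ i : Fin n, s = C i}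

lemma Fσ_le {m : MeasurableSpace Ω'} {C : ℕ → Set Ω'} {n : ℕ}
    (hC : ∀ i : Fin n, MeasurableSet[m] (C i)) : Fσ C n ≤ m :=
  MeasurableSpace.generateFrom_le (by rintro s ⟨i, rfl⟩; exact hC i)

lemma Fσ_basic {C : ℕ → Set Ω'} {n : ℕ} (i : Fin n) :
    MeasurableSet[Fσ C n] (C i) :=
  MeasurableSpace.measurableSet_generateFrom ⟨i, rfl⟩

lemma Fσ_mono (C : ℕ → Set Ω') : Monotone (Fσ C) := by
  intro n m h
  refine MeasurableSpace.generateFrom_le ?_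
  rintro s ⟨i, rfl⟩
  exact MeasurableSpace.measurableSet_generateFrom ⟨⟨i.1, lt_of_lt_of_le i.2 h⟩, rfl⟩

lemma iSup_Fσ (C : ℕ → Set Ω') :
    (⨆ n, Fσ C n) = MeasurableSpace.generateFrom (Set.range C) := by
  apply le_antisymm
  · refine iSup_le fun n => MeasurableSpace.generateFrom_le ?_
    rintro s ⟨i, rfl⟩
    exact MeasurableSpace.measurableSet_generateFrom ⟨i.1, rfl⟩
  · refine MeasurableSpace.generateFrom_le ?_
    rintro s ⟨i, rfl⟩
    exact le_iSup (Fσ C) (i + 1) _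
      (Fσ_basic (C := C) (n := i + 1) ⟨i, Nat.lt_succ_self i⟩)

lemma bAtom_Fσ {C : ℕ → Set Ω'} {n : ℕ} (β : Fin n → Bool) :
    MeasurableSet[Fσ C n] (bAtom C n β) :=
  measurableSet_bAtom (fun i => Fσ_basic i) β

lemma exists_preimage_of_Fσ {C : ℕ → Set Ω'} {n : ℕ} {s : Set Ω'}
    (hs : MeasurableSet[Fσ C n] s) :
    ∃ V : Set (Fin n → Bool), s = vFn C n ⁻¹' V := by
  induction s, hs using MeasurableSpace.generateFrom_induction with
  | hC t ht _ =>
    obtain ⟨i, rfl⟩ := ht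
    refine ⟨{β | β i = true}, ?_⟩
    ext x; simp [vFn]
  | empty => exact ⟨∅, by simp⟩
  | compl t _ ih =>
    obtain ⟨V, rfl⟩ := ih
    exact ⟨Vᶜ, by rw [preimage_compl]⟩
  | iUnion g _ ih =>
    choose V hV using ih
    exact ⟨⋃ i, V i, by simp [hV, preimage_iUnion]⟩

lemma setIntegral_cApp [IsProbabilityMeasure μ] {C : ℕ → Set Ω'} (hC : ∀ i, MeasurableSet (C i))
    {n : ℕ} {f : Ω' → ℝ} (hf : Integrable f μ) (V : Set (Fin n → Bool)) :
    ∫ x in vFn C n ⁻¹' V, cApp μ C n f x ∂μ = ∫ x in vFn C n ⁻¹' V, f x ∂μ := by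
  classical
  have hCn : ∀ i : Fin n, MeasurableSet (C i) := fun i => hC i
  set T : Finset (Fin n → Bool) := Finset.univ.filter (· ∈ V) with hT
  have hdecomp : vFn C n ⁻¹' V = ⋃ β ∈ T, bAtom C n β := by
    ext x
    simp only [mem_preimage, mem_iUnion, exists_prop, hT, Finset.mem_filter,
      Finset.mem_univ, true_and, mem_bAtom_iff]
    constructor
    · intro h; exact ⟨vFn C n x, h, rfl⟩
    · rintro ⟨β, hβ, rfl⟩; exact hβ
  have hmeasβ : ∀ β ∈ T, MeasurableSet (bAtom C n β) :=
    fun β _ => measurableSet_bAtom hCn β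
  have hdisj : Set.Pairwise ↑T (Function.onFun Disjoint fun β => bAtom C n β) := by
    intro β _ β' _ hne
    simp only [Function.onFun, bAtom_eq_preimage]
    exact Disjoint.preimage _ (by simp [hne])
  have hatom : ∀ β : Fin n → Bool,
      ∫ x in bAtom C n β, cApp μ C n f x ∂μ = ∫ x in bAtom C n β, f x ∂μ := by
    intro β
    have hconst : EqOn (cApp μ C n f) (fun _ => avgOn μ (bAtom C n β) f) (bAtom C n β) :=
      fun x hx => by rw [cApp_eq, mem_bAtom_iff.mp hx]
    rw [setIntegral_congr_fun (measurableSet_bAtom hCn β) hconst, setIntegral_const]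
    by_cases h0 : μ (bAtom C n β) = 0
    · have : μ.restrict (bAtom C n β) = 0 := Measure.restrict_eq_zero.mpr h0
      simp [h0, this, measureReal_def]
    · have hne : (μ (bAtom C n β)).toReal ≠ 0 :=
        ENNReal.toReal_ne_zero.mpr ⟨h0, measure_ne_top μ _⟩
      rw [smul_eq_mul, avgOn, mul_comm, measureReal_def, div_mul_cancel₀ _ hne]
  rw [hdecomp,
    integral_biUnion_finset T hmeasβ hdisj
      (fun β hβ => (integrable_cApp μ hCn).integrableOn),
    integral_biUnion_finset T hmeasβ hdisj (fun β hβ => hf.integrableOn)]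
  exact Finset.sum_congr rfl fun β _ => hatom β

lemma cApp_ae_eq_condexp [IsProbabilityMeasure μ] {C : ℕ → Set Ω'}
    (hC : ∀ i, MeasurableSet (C i)) (n : ℕ) {f : Ω' → ℝ} (hf : Integrable f μ) :
    cApp μ C n f =ᵐ[μ] μ[f | Fσ C n] := by
  have hm : Fσ C n ≤ mΩ' := Fσ_le fun i => hC i
  haveI : SigmaFinite (μ.trim hm) := by
    haveI := isFiniteMeasure_trim (μ := μ) hm
    infer_instance
  refine ae_eq_condExp_of_forall_setIntegral_eq hm hf ?_ ?_ ?_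
  · exact fun s _ _ => (integrable_cApp μ fun i => hC i).integrableOn
  · intro s hs _
    obtain ⟨V, rfl⟩ := exists_preimage_of_Fσ hs
    exact setIntegral_cApp μ hC hf V
  · exact StronglyMeasurable.aestronglyMeasurable
      ((measurable_cApp μ fun i => Fσ_basic i).stronglyMeasurable)

lemma tendsto_cApp [IsProbabilityMeasure μ] {C : ℕ → Set Ω'}
    (hC : ∀ i, MeasurableSet (C i)) {f g : Ω' → ℝ} (hf : Integrable f μ)
    (hg : StronglyMeasurable[MeasurableSpace.generateFrom (Set.range C)] g)
    (hfg : f =ᵐ[μ] g) :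
    ∀ᵐ x ∂μ, Tendsto (fun n => cApp μ C n f x) atTop (𝓝 (f x)) := by
  set ℱ : Filtration ℕ mΩ' :=
    ⟨fun n => Fσ C n, fun n m h => Fσ_mono C h, fun n => Fσ_le fun i => hC i⟩ with hℱ
  have hsup : (⨆ n, ℱ n) = MeasurableSpace.generateFrom (Set.range C) := iSup_Fσ C
  have hgi : Integrable g μ := hf.congr hfg
  have hgm : StronglyMeasurable[⨆ n, ℱ n] g := by rw [hsup]; exact hg
  have levy := hgi.tendsto_ae_condExp hgm
  have hae : ∀ᵐ x ∂μ, ∀ n, cApp μ C n f x = (μ[g | ℱ n]) x := by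
    rw [ae_all_iff]; intro n
    exact (cApp_ae_eq_condexp μ hC n hf).trans (condExp_congr_ae hfg)
  filter_upwards [levy, hae, hfg] with x hx h1 h2
  rw [h2]
  exact hx.congr (fun n => (h1 n).symm)




section Dyadic

def dy (k : ℕ) (t : ℝ) : ℝ := (⌊t * 2 ^ k⌋ : ℤ) / 2 ^ k

lemma dy_le (k : ℕ) (t : ℝ) : dy k t ≤ t := by
  rw [dy, div_le_iff₀ (by positivity : (0:ℝ) < 2 ^ k)]
  exact Int.floor_le _

lemma dy_mono_k (t : ℝ) : Monotone fun k => dy k t := by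
  refine monotone_nat_of_le_succ fun k => ?_
  have h1 : dy k t = (2 * (⌊t * 2 ^ k⌋ : ℤ) : ℝ) / 2 ^ (k + 1) := by
    rw [dy, pow_succ]
    push_cast
    field_simp
  have h2 : (2 * ⌊t * 2 ^ k⌋ : ℤ) ≤ ⌊t * 2 ^ (k + 1)⌋ := by
    refine Int.le_floor.mpr ?_
    push_cast
    have := Int.floor_le (t * 2 ^ k)
    rw [pow_succ]
    nlinarith
  rw [h1, dy]
  gcongr
  exact_mod_cast h2

lemma dy_lb (k : ℕ) (t : ℝ) : t - (1/2) ^ k ≤ dy k t := by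
  have h2k : (0:ℝ) < 2 ^ k := by positivity
  rw [dy, le_div_iff₀ h2k]
  have := Int.sub_one_lt_floor (t * 2 ^ k)
  have hpow : ((1:ℝ)/2) ^ k * 2 ^ k = 1 := by
    rw [div_pow, one_pow, div_mul_cancel₀]
    positivity
  nlinarith [Int.sub_one_lt_floor (t * 2 ^ k)]

lemma dy_tendsto (t : ℝ) : Tendsto (fun k => dy k t) atTop (𝓝 t) := by
  have h1 : Tendsto (fun k : ℕ => t - (1/2:ℝ) ^ k) atTop (𝓝 t) := by
    have := tendsto_pow_atTop_nhds_zero_of_lt_one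
      (by norm_num : (0:ℝ) ≤ 1/2) (by norm_num : (1/2:ℝ) < 1)
    simpa using tendsto_const_nhds.sub this
  exact tendsto_of_tendsto_of_tendsto_of_le_of_le h1 tendsto_const_nhds
    (fun k => dy_lb k t) (fun k => dy_le k t)

lemma dy_measurable (k : ℕ) : Measurable (dy k) := by
  have h1 : Measurable fun t : ℝ => ⌊t * 2 ^ k⌋ :=
    Int.measurable_floor.comp (measurable_id.mul_const _)
  have h2 : Measurable fun z : ℤ => (z : ℝ) / 2 ^ k := measurable_from_top
  exact h2.comp h1

lemma dy_range_countable (k : ℕ) : (Set.range (dy k)).Countable := by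
  have : Set.range (dy k) ⊆ Set.range (fun z : ℤ => (z : ℝ) / 2 ^ k) := by
    rintro x ⟨t, rfl⟩; exact ⟨⌊t * 2 ^ k⌋, rfl⟩
  exact (Set.countable_range _).mono this

end Dyadic

variable {Ω' : Type*} {mΩ' : MeasurableSpace Ω'} (μ : Measure Ω') [IsProbabilityMeasure μ]
  (G : ℝ → MeasurableSpace Ω')

def indA (A : Set Ω') : Ω' → ℝ := A.indicator (fun _ => 1)

def mart (A : Set Ω') (t : ℝ) : Ω' → ℝ := μ[indA A | G t]

def phiA (A : Set Ω') (t : ℝ) : ℝ := ∫ x, (mart μ G A t x) ^ 2 ∂μ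

variable {G}

lemma indA_int {A : Set Ω'} (hA : MeasurableSet A) : Integrable (indA A) μ :=
  (integrable_const (1:ℝ)).indicator hA

lemma indA_mem_Icc (A : Set Ω') (x : Ω') : indA A x ∈ Icc (0:ℝ) 1 := by
  by_cases hx : x ∈ A <;> simp [indA, hx]

lemma int_bdd {h : Ω' → ℝ} (C : ℝ) (hmeas : AEStronglyMeasurable h μ)
    (hb : ∀ᵐ x ∂μ, |h x| ≤ C) : Integrable h μ :=
  Integrable.mono' (integrable_const C) hmeas (by simpa using hb)

lemma abs_le_one_of_Icc {y : ℝ} (h : y ∈ Icc (0:ℝ) 1) : |y| ≤ 1 :=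
  abs_le.mpr ⟨by linarith [h.1], h.2⟩

lemma mul_int {h1 h2 : Ω' → ℝ} (ha1 : AEStronglyMeasurable h1 μ)
    (ha2 : AEStronglyMeasurable h2 μ) (hb1 : ∀ᵐ x ∂μ, h1 x ∈ Icc (0:ℝ) 1)
    (hb2 : ∀ᵐ x ∂μ, h2 x ∈ Icc (0:ℝ) 1) :
    Integrable (fun x => h1 x * h2 x) μ := by
  refine int_bdd μ 1 (ha1.mul ha2) ?_
  filter_upwards [hb1, hb2] with x hx1 hx2
  rw [abs_mul]
  have g1 := abs_le_one_of_Icc hx1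
  have g2 := abs_le_one_of_Icc hx2
  nlinarith [abs_nonneg (h1 x), abs_nonneg (h2 x)]

lemma sq_int {h : Ω' → ℝ} (ha : AEStronglyMeasurable h μ)
    (hb : ∀ᵐ x ∂μ, h x ∈ Icc (0:ℝ) 1) :
    Integrable (fun x => h x ^ 2) μ := by
  have := mul_int μ ha ha hb hb
  exact this.congr (Eventually.of_forall fun x => (sq (h x)).symm)

lemma condexp01 {m : MeasurableSpace Ω'} (hm : m ≤ mΩ') {f : Ω' → ℝ}
    (hfi : Integrable f μ) (hf01 : ∀ᵐ x ∂μ, f x ∈ Icc (0:ℝ) 1) :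
    ∀ᵐ x ∂μ, (μ[f|m]) x ∈ Icc (0:ℝ) 1 := by
  have h0 : 0 ≤ᵐ[μ] μ[f|m] := condExp_nonneg (hf01.mono fun x hx => hx.1)
  have h1 : μ[f|m] ≤ᵐ[μ] μ[fun _ => (1:ℝ)|m] :=
    condExp_mono hfi (integrable_const 1) (hf01.mono fun x hx => hx.2)
  have h2 : μ[fun _ => (1:ℝ)|m] = fun _ => (1:ℝ) := condExp_const hm 1
  filter_upwards [h0, h1] with x hx0 hx1
  exact ⟨hx0, by rw [h2] at hx1; exact hx1⟩

lemma mart_mem_Icc (hG : ∀ t, G t ≤ mΩ') {A : Set Ω'} (hA : MeasurableSet A) (t : ℝ) :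
    ∀ᵐ x ∂μ, mart μ G A t x ∈ Icc (0:ℝ) 1 :=
  condexp01 μ (hG t) (indA_int μ hA) (Eventually.of_forall (indA_mem_Icc A))

lemma key_integral {m m' : MeasurableSpace Ω'} (hmm' : m ≤ m') (hm' : m' ≤ mΩ')
    {f : Ω' → ℝ} (hfi : Integrable f μ) (hf01 : ∀ᵐ x ∂μ, f x ∈ Icc (0:ℝ) 1) :
    ∫ x, (μ[f|m]) x * (μ[f|m']) x ∂μ = ∫ x, ((μ[f|m]) x) ^ 2 ∂μ := by
  have hm : m ≤ mΩ' := hmm'.trans hm'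
  set N := μ[f|m] with hN
  set M := μ[f|m'] with hM
  have bN : ∀ᵐ x ∂μ, N x ∈ Icc (0:ℝ) 1 := condexp01 μ hm hfi hf01
  have bM : ∀ᵐ x ∂μ, M x ∈ Icc (0:ℝ) 1 := condexp01 μ hm' hfi hf01
  have hNsm : StronglyMeasurable[m] N := stronglyMeasurable_condExp
  have hNasm : AEStronglyMeasurable[mΩ'] N μ :=
    (hNsm.mono hm).aestronglyMeasurable
  have hMasm : AEStronglyMeasurable[mΩ'] M μ :=
    (stronglyMeasurable_condExp.mono hm').aestronglyMeasurable
  have hNM_int : Integrable (N * M) μ :=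
    (mul_int μ hNasm hMasm bN bM).congr
      (Eventually.of_forall fun x => rfl)
  have pull : μ[N * M|m] =ᵐ[μ] N * μ[M|m] :=
    condExp_mul_of_stronglyMeasurable_left hNsm hNM_int integrable_condExp
  have tower : μ[M|m] =ᵐ[μ] N := condExp_condExp_of_le hmm' hm'
  haveI : SigmaFinite (μ.trim hm) := by
    haveI := isFiniteMeasure_trim (μ := μ) hm
    infer_instance
  calc ∫ x, N x * M x ∂μ = ∫ x, (μ[N * M|m]) x ∂μ := by
        rw [integral_condExp hm]
        simp only [Pi.mul_apply]
    _ = ∫ x, (N x) ^ 2 ∂μ := by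
        refine integral_congr_ae ?_
        filter_upwards [pull, tower] with x h1 h2
        rw [h1]
        simp only [Pi.mul_apply, h2, sq]

lemma phiA_mono (hG : ∀ t, G t ≤ mΩ') (hGmono : Monotone G) {A : Set Ω'}
    (hA : MeasurableSet A) : Monotone (phiA μ G A) := by
  intro s t hst
  have hfi := indA_int μ hA
  have hf01 : ∀ᵐ x ∂μ, indA A x ∈ Icc (0:ℝ) 1 :=
    Eventually.of_forall (indA_mem_Icc A)
  have h1 : ∫ x, (mart μ G A s x) * (mart μ G A t x) ∂μ = phiA μ G A s :=
    key_integral μ (hGmono hst) (hG t) hfi hf01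
  have bMs := mart_mem_Icc μ hG hA s
  have bMt := mart_mem_Icc μ hG hA t
  have hasm : ∀ u : ℝ, AEStronglyMeasurable (mart μ G A u) μ := fun u =>
    (stronglyMeasurable_condExp.mono (hG u)).aestronglyMeasurable
  have ints2 : Integrable (fun x => (mart μ G A s x) ^ 2) μ :=
    sq_int μ (hasm s) bMs
  have intt2 : Integrable (fun x => (mart μ G A t x) ^ 2) μ :=
    sq_int μ (hasm t) bMt
  have intst : Integrable (fun x => mart μ G A s x * mart μ G A t x) μ :=
    mul_int μ (hasm s) (hasm t) bMs bMt
  have hle : ∀ᵐ x ∂μ, mart μ G A s x * mart μ G A t x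
      ≤ ((mart μ G A s x) ^ 2 + (mart μ G A t x) ^ 2) / 2 := by
    refine Eventually.of_forall fun x => ?_
    nlinarith [sq_nonneg (mart μ G A s x - mart μ G A t x)]
  have h2 : ∫ x, mart μ G A s x * mart μ G A t x ∂μ
      ≤ ∫ x, ((mart μ G A s x) ^ 2 + (mart μ G A t x) ^ 2) / 2 ∂μ :=
    integral_mono_ae intst ((ints2.add intt2).div_const 2) hle
  have h3 : ∫ x, ((mart μ G A s x) ^ 2 + (mart μ G A t x) ^ 2) / 2 ∂μ
      = (phiA μ G A s + phiA μ G A t) / 2 := by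
    rw [integral_div, integral_add ints2 intt2]; rfl
  rw [h3] at h2
  rw [h1] at h2
  linarith

variable (G) in
def DD (A : Set Ω') : Set ℝ := {t | ¬ContinuousAt (phiA μ G A) t}

lemma DD_countable (hG : ∀ t, G t ≤ mΩ') (hGmono : Monotone G) {A : Set Ω'}
    (hA : MeasurableSet A) : (DD μ G A).Countable :=
  (phiA_mono μ hG hGmono hA).countable_not_continuousAt


lemma mart_dy_tendsto (hG : ∀ t, G t ≤ mΩ') (hGmono : Monotone G) {A : Set Ω'}
    (hA : MeasurableSet A) (t : ℝ) (hcont : ContinuousAt (phiA μ G A) t) :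
    ∀ᵐ x ∂μ, Tendsto (fun k => mart μ G A (dy k t) x) atTop (𝓝 (mart μ G A t x)) := by
  have hfi := indA_int μ hA
  have hf01 : ∀ᵐ x ∂μ, indA A x ∈ Icc (0:ℝ) 1 :=
    Eventually.of_forall (indA_mem_Icc A)
  set mI := ⨆ k, G (dy k t) with hmIdef
  have hmIt : mI ≤ G t := iSup_le fun k => hGmono (dy_le k t)
  have hmI0 : mI ≤ mΩ' := hmIt.trans (hG t)
  set ℱ : Filtration ℕ mΩ' :=
    ⟨fun k => G (dy k t), fun a b hab => hGmono (dy_mono_k t hab), fun k => hG _⟩ with hF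
  have hsupF : (⨆ k, ℱ k) = mI := rfl
  set N := μ[indA A|mI] with hNdef
  have hNmeas : StronglyMeasurable[⨆ k, ℱ k] N := by
    rw [hsupF]; exact stronglyMeasurable_condExp
  have levy := Integrable.tendsto_ae_condExp integrable_condExp hNmeas
  have hae : ∀ᵐ x ∂μ, ∀ k, (μ[N|ℱ k]) x = mart μ G A (dy k t) x := by
    rw [ae_all_iff]; intro k
    exact condExp_condExp_of_le (le_iSup (fun k => G (dy k t)) k) hmI0
  have bN : ∀ᵐ x ∂μ, N x ∈ Icc (0:ℝ) 1 := condexp01 μ hmI0 hfi hf01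
  have bM := mart_mem_Icc μ hG hA t
  have hNasm : AEStronglyMeasurable[mΩ'] N μ :=
    (stronglyMeasurable_condExp.mono hmI0).aestronglyMeasurable
  have hMasm : AEStronglyMeasurable[mΩ'] (mart μ G A t) μ :=
    (stronglyMeasurable_condExp.mono (hG t)).aestronglyMeasurable
  have h1 : ∫ x, N x * mart μ G A t x ∂μ = ∫ x, (N x) ^ 2 ∂μ :=
    key_integral μ hmIt (hG t) hfi hf01
  have hconv0 : ∀ᵐ x ∂μ, Tendsto (fun k => mart μ G A (dy k t) x) atTop (𝓝 (N x)) := by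
    filter_upwards [levy, hae] with x hx h2
    exact hx.congr (fun k => h2 k)
  have h2 : Tendsto (fun k => phiA μ G A (dy k t)) atTop (𝓝 (∫ x, (N x) ^ 2 ∂μ)) := by
    show Tendsto (fun k => ∫ x, (mart μ G A (dy k t) x) ^ 2 ∂μ) atTop (𝓝 (∫ x, (N x) ^ 2 ∂μ))
    refine tendsto_integral_of_dominated_convergence (fun _ => (1:ℝ)) ?_ (integrable_const 1) ?_ ?_
    · intro k
      exact ((stronglyMeasurable_condExp.mono (hG (dy k t))).aestronglyMeasurable.mul
        (stronglyMeasurable_condExp.mono (hG (dy k t))).aestronglyMeasurable).congr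
        (Eventually.of_forall fun x => (sq _).symm)
    · intro k
      filter_upwards [mart_mem_Icc μ hG hA (dy k t)] with x hx
      have habs := abs_le_one_of_Icc hx
      rw [Real.norm_eq_abs, abs_pow]
      nlinarith [abs_nonneg (mart μ G A (dy k t) x)]
    · filter_upwards [hconv0] with x hx
      exact (continuous_pow 2).continuousAt.tendsto.comp hx
  have h3 : Tendsto (fun k => phiA μ G A (dy k t)) atTop (𝓝 (phiA μ G A t)) :=
    hcont.tendsto.comp (dy_tendsto t)
  have h4 : ∫ x, (N x) ^ 2 ∂μ = phiA μ G A t := tendsto_nhds_unique h2 h3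
  have intM2 : Integrable (fun x => (mart μ G A t x) ^ 2) μ := sq_int μ hMasm bM
  have intN2 : Integrable (fun x => (N x) ^ 2) μ := sq_int μ hNasm bN
  have intNM : Integrable (fun x => N x * mart μ G A t x) μ := mul_int μ hNasm hMasm bN bM
  have hexp : (fun x => (mart μ G A t x - N x) ^ 2)
      = fun x => ((mart μ G A t x) ^ 2 - 2 * (N x * mart μ G A t x)) + (N x) ^ 2 := by
    funext x; ring
  have hint_sub : Integrable
      (fun x => (mart μ G A t x) ^ 2 - 2 * (N x * mart μ G A t x)) μ :=
    intM2.sub (intNM.const_mul 2)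
  have h5 : ∫ x, (mart μ G A t x - N x) ^ 2 ∂μ = 0 := by
    rw [hexp, integral_add hint_sub intN2, integral_sub intM2 (intNM.const_mul 2),
      integral_const_mul]
    have hphit : ∫ x, (mart μ G A t x) ^ 2 ∂μ = phiA μ G A t := rfl
    rw [hphit, h1, h4]; ring
  have hintsq : Integrable (fun x => (mart μ G A t x - N x) ^ 2) μ :=
    (hint_sub.add intN2).congr (Eventually.of_forall fun x => (congrFun hexp x).symm)
  have h6 : ∀ᵐ x ∂μ, (mart μ G A t x - N x) ^ 2 = 0 := by
    have := (integral_eq_zero_iff_of_nonneg (fun x => sq_nonneg _) hintsq).mp h5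
    filter_upwards [this] with x hx
    exact hx
  have hMN : N =ᵐ[μ] mart μ G A t := by
    filter_upwards [h6] with x hx
    have h7 : mart μ G A t x - N x = 0 := by
      have := (pow_eq_zero_iff two_ne_zero).mp hx
      exact this
    linarith [h7]
  filter_upwards [hconv0, hMN] with x hx h7
  rw [← h7]; exact hx

variable (G) in
def Hfun (A : Set Ω') (t : ℝ) (x : Ω') : ℝ :=
  if t ∈ DD μ G A then clamp (mart μ G A t x)
  else eLimPt (fun k => clamp (mart μ G A (dy k t) x))

lemma Hfun_mem_Icc (A : Set Ω') (t : ℝ) (x : Ω') : Hfun μ G A t x ∈ Icc (0:ℝ) 1 := by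
  rw [Hfun]; split_ifs
  · exact clamp_mem_Icc _
  · exact eLimPt_mem_Icc fun k => (clamp_mem_Icc _).2

lemma Hfun_ae_eq (hG : ∀ t, G t ≤ mΩ') (hGmono : Monotone G) {A : Set Ω'}
    (hA : MeasurableSet A) (t : ℝ) : Hfun μ G A t =ᵐ[μ] mart μ G A t := by
  by_cases ht : t ∈ DD μ G A
  · have : Hfun μ G A t = fun x => clamp (mart μ G A t x) := by
      funext x; rw [Hfun, if_pos ht]
    rw [this]
    filter_upwards [mart_mem_Icc μ hG hA t] with x hx
    exact clamp_of_mem hx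
  · have hfeq : Hfun μ G A t = fun x => eLimPt (fun k => clamp (mart μ G A (dy k t) x)) := by
      funext x; rw [Hfun, if_neg ht]
    rw [hfeq]
    have hconv := mart_dy_tendsto μ hG hGmono hA t (not_not.mp ht)
    filter_upwards [hconv, mart_mem_Icc μ hG hA t] with x hx h01
    have hcl : Tendsto (fun k => clamp (mart μ G A (dy k t) x)) atTop
        (𝓝 (clamp (mart μ G A t x))) := (continuous_clamp.tendsto _).comp hx
    rw [clamp_of_mem h01] at hcl
    exact eLimPt_of_tendsto h01.1 hcl

lemma Hfun_meas (hGmono : Monotone G) (A : Set Ω') (t : ℝ) :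
    Measurable[G t] (Hfun μ G A t) := by
  unfold Hfun
  split_ifs with ht
  · exact measurable_clamp.comp stronglyMeasurable_condExp.measurable
  · refine eLimPt_meas fun k => ?_
    exact measurable_clamp.comp
      ((stronglyMeasurable_condExp.measurable).mono (hGmono (dy_le k t)) le_rfl)

lemma Hfun_joint (hG : ∀ t, G t ≤ mΩ') (hGmono : Monotone G) {A : Set Ω'}
    (hA : MeasurableSet A) :
    Measurable fun p : ℝ × Ω' => Hfun μ G A p.1 p.2 := by
  have hD : (DD μ G A).Countable := DD_countable μ hG hGmono hA
  have hmart_meas : ∀ u : ℝ, Measurable (mart μ G A u) := fun u =>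
    (stronglyMeasurable_condExp.measurable).mono (hG u) le_rfl
  have hℓ : Measurable fun p : ℝ × Ω' =>
      eLimPt (fun k => clamp (mart μ G A (dy k p.1) p.2)) := by
    refine eLimPt_meas fun k => ?_
    refine measurable_cases (fun p : ℝ × Ω' => dy k p.1) ?_ ?_
      (fun d p => clamp (mart μ G A d p.2)) ?_
    · exact ((dy_range_countable k).mono (Set.range_comp_subset_range Prod.fst (dy k)))
    · intro d
      exact ((dy_measurable k).comp measurable_fst) (measurableSet_singleton d)
    · intro d
      exact measurable_clamp.comp ((hmart_meas d).comp measurable_snd)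
  have := measurable_patch hD (fun t x => clamp (mart μ G A t x))
    (fun t _ => measurable_clamp.comp (hmart_meas t)) hℓ
  have heq : (fun p : ℝ × Ω' => Hfun μ G A p.1 p.2)
      = fun p : ℝ × Ω' => if p.1 ∈ DD μ G A then clamp (mart μ G A p.1 p.2)
          else eLimPt (fun k => clamp (mart μ G A (dy k p.1) p.2)) := by
    funext p; rfl
  rw [heq]; exact this



section WLayer

lemma lipschitz_setIntegral (A : Set Ω') :
    LipschitzWith 1 (fun f : Lp ℝ 1 μ => ∫ x in A, (f : Ω' → ℝ) x ∂μ) := by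
  refine LipschitzWith.of_dist_le_mul fun f g => ?_
  rw [NNReal.coe_one, one_mul, Real.dist_eq, dist_eq_norm]
  have hfi : Integrable (f : Ω' → ℝ) μ := L1.integrable_coeFn f
  have hgi : Integrable (g : Ω' → ℝ) μ := L1.integrable_coeFn g
  have hsub : ∫ x in A, (f : Ω' → ℝ) x ∂μ - ∫ x in A, (g : Ω' → ℝ) x ∂μ
      = ∫ x in A, ((f : Ω' → ℝ) x - (g : Ω' → ℝ) x) ∂μ :=
    (integral_sub hfi.integrableOn hgi.integrableOn).symm
  rw [hsub]
  have h1 : |∫ x in A, ((f : Ω' → ℝ) x - (g : Ω' → ℝ) x) ∂μ|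
      ≤ ∫ x in A, |(f : Ω' → ℝ) x - (g : Ω' → ℝ) x| ∂μ := by
    simpa [Real.norm_eq_abs] using
      norm_integral_le_integral_norm (μ := μ.restrict A)
        (f := fun x => (f : Ω' → ℝ) x - (g : Ω' → ℝ) x)
  have h2 : ∫ x in A, |(f : Ω' → ℝ) x - (g : Ω' → ℝ) x| ∂μ
      ≤ ∫ x, |(f : Ω' → ℝ) x - (g : Ω' → ℝ) x| ∂μ := by
    refine setIntegral_le_integral (hfi.sub hgi).abs ?_
    exact Eventually.of_forall fun x => abs_nonneg _
  have h3 : ∫ x, |(f : Ω' → ℝ) x - (g : Ω' → ℝ) x| ∂μ = ‖f - g‖ := by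
    rw [L1.norm_eq_integral_norm]
    refine integral_congr_ae ?_
    filter_upwards [Lp.coeFn_sub f g] with x hx
    rw [hx, Real.norm_eq_abs]
    rfl
  calc |∫ x in A, ((f : Ω' → ℝ) x - (g : Ω' → ℝ) x) ∂μ|
      ≤ ∫ x in A, |(f : Ω' → ℝ) x - (g : Ω' → ℝ) x| ∂μ := h1
    _ ≤ ∫ x, |(f : Ω' → ℝ) x - (g : Ω' → ℝ) x| ∂μ := h2
    _ = ‖f - g‖ := h3

lemma meas_avg_comp {α : Type*} {mα : MeasurableSpace α} {Z : α → Lp ℝ 1 μ}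
    (hZ : StronglyMeasurable[mα] Z) (A : Set Ω') :
    Measurable[mα] fun a => avgOn μ A (Z a) := by
  have h1 : Measurable[mα] fun a => ∫ x in A, (Z a : Ω' → ℝ) x ∂μ :=
    ((lipschitz_setIntegral μ A).continuous.comp_stronglyMeasurable hZ).measurable
  exact h1.div_const _

lemma meas_cApp_comp {α : Type*} {mα : MeasurableSpace α} {Z : α → Lp ℝ 1 μ}
    (hZ : StronglyMeasurable[mα] Z) {S : ℕ → Set Ω'} (hS : ∀ i, MeasurableSet (S i))
    (n : ℕ) {π : α → Ω'} (hπ : Measurable[mα] π) :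
    Measurable[mα] fun a => cApp μ S n (Z a) (π a) := by
  have heq : (fun a => cApp μ S n (Z a) (π a))
      = fun a => avgOn μ (bAtom S n (vFn S n (π a))) (Z a) :=
    funext fun a => cApp_eq μ S n _ _
  rw [heq]
  refine measurable_cases (fun a => vFn S n (π a)) (Set.to_countable _) ?_
    (fun β a => avgOn μ (bAtom S n β) (Z a)) ?_
  · intro β
    have : (fun a => vFn S n (π a)) ⁻¹' {β} = π ⁻¹' (bAtom S n β) := by
      ext a; simp [mem_bAtom_iff]
    rw [this]
    exact hπ (measurableSet_bAtom (fun i => hS i) β)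
  · intro β
    exact meas_avg_comp μ hZ _

def Wb (S : ℕ → Set Ω') (ζ : Lp ℝ 1 μ) (x : Ω') : ℝ :=
  eLimPt (fun n => clamp (cApp μ S n (ζ : Ω' → ℝ) x))

lemma Wb_mem_Icc (S : ℕ → Set Ω') (ζ : Lp ℝ 1 μ) (x : Ω') :
    Wb μ S ζ x ∈ Icc (0:ℝ) 1 :=
  eLimPt_mem_Icc fun n => (clamp_mem_Icc _).2

lemma Wb_meas_comp {α : Type*} {mα : MeasurableSpace α} {Z : α → Lp ℝ 1 μ}
    (hZ : StronglyMeasurable[mα] Z) {S : ℕ → Set Ω'} (hS : ∀ i, MeasurableSet (S i))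
    {π : α → Ω'} (hπ : Measurable[mα] π) :
    Measurable[mα] fun a => Wb μ S (Z a) (π a) :=
  eLimPt_meas fun n => measurable_clamp.comp (meas_cApp_comp μ hZ hS n hπ)

lemma Wb_ae_eq {S : ℕ → Set Ω'} (hS : ∀ i, MeasurableSet (S i))
    (hSgen : MeasurableSpace.generateFrom (Set.range S) = mΩ') (ζ : Lp ℝ 1 μ)
    (hζ01 : ∀ᵐ x ∂μ, (ζ : Ω' → ℝ) x ∈ Icc (0:ℝ) 1) :
    (fun x => Wb μ S ζ x) =ᵐ[μ] (ζ : Ω' → ℝ) := by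
  obtain ⟨g, hgsm, hgae⟩ := Lp.aestronglyMeasurable ζ
  have hgsm' : StronglyMeasurable[MeasurableSpace.generateFrom (Set.range S)] g := by
    rw [hSgen]; exact hgsm
  have htd := tendsto_cApp μ hS (L1.integrable_coeFn ζ) hgsm' hgae
  filter_upwards [htd, hζ01] with x hx h01
  have hcl : Tendsto (fun n => clamp (cApp μ S n (ζ : Ω' → ℝ) x)) atTop
      (𝓝 (clamp ((ζ : Ω' → ℝ) x))) := (continuous_clamp.tendsto _).comp hx
  rw [clamp_of_mem h01] at hcl
  exact eLimPt_of_tendsto h01.1 hcl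

lemma avgOn_congr_ae {A : Set Ω'} {f g : Ω' → ℝ} (h : f =ᵐ[μ] g) :
    avgOn μ A f = avgOn μ A g := by
  rw [avgOn, avgOn, integral_congr_ae (ae_restrict_of_ae (h.mono fun x hx => hx))]

end WLayer

end AdaptedSel

set_option maxHeartbeats 1000000 in
/-- Adapted measurable selection in `L¹(Ω',𝒢,ℙ;[0,1])`: if `X : [0,T] × Ω → L¹(Ω';[0,1])`
is jointly measurable, `𝔽`-adapted and satisfies `X_t(ω) ∈ L¹(Ω',𝒢_t,ℙ;[0,1])` for all
`(t,ω)`, then there is a jointly measurable, `𝔽 ⊗ 𝔾`-adapted, `[0,1]`-valued process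
`Y : [0,T] × Ω × Ω' → [0,1]` with `Y_t(ω,·) = X_t(ω)` in `L¹` for every `(t,ω)`. -/
theorem stmt2 {Ω Ω' : Type*} [mΩ : MeasurableSpace Ω] [mΩ' : MeasurableSpace Ω']
    (μ : Measure Ω') [IsProbabilityMeasure μ] [MeasurableSpace.CountablyGenerated Ω']
    (T : ℝ)
    (F : ℝ → MeasurableSpace Ω) (hF : ∀ t, F t ≤ mΩ) (hFmono : Monotone F)
    (G : ℝ → MeasurableSpace Ω') (hG : ∀ t, G t ≤ mΩ') (hGmono : Monotone G)
    (X : ℝ → Ω → Lp ℝ 1 μ)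
    (hXmeas : StronglyMeasurable fun p : ℝ × Ω => X p.1 p.2)
    (hXadp : ∀ t ∈ Icc (0:ℝ) T, StronglyMeasurable[F t] (X t))
    (hX01 : ∀ t ∈ Icc (0:ℝ) T, ∀ ω, ∀ᵐ ω' ∂μ, (X t ω : Ω' → ℝ) ω' ∈ Icc (0:ℝ) 1)
    (hXG : ∀ t ∈ Icc (0:ℝ) T, ∀ ω, X t ω ∈ lpMeas ℝ ℝ (G t) 1 μ) :
    ∃ Y : ℝ → Ω → Ω' → ℝ,
      (∀ t ω ω', Y t ω ω' ∈ Icc (0:ℝ) 1) ∧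
      Measurable (fun p : ℝ × Ω × Ω' => Y p.1 p.2.1 p.2.2) ∧
      (∀ t ∈ Icc (0:ℝ) T, Measurable[(F t).prod (G t)] fun p : Ω × Ω' => Y t p.1 p.2) ∧
      (∀ t ∈ Icc (0:ℝ) T, ∀ ω, (fun ω' => Y t ω ω') =ᵐ[μ] (X t ω : Ω' → ℝ)) := by
  classical
  obtain ⟨S, hSrange⟩ := (MeasurableSpace.countable_countableGeneratingSet (α := Ω')).exists_eq_range
    ⟨∅, MeasurableSpace.empty_mem_countableGeneratingSet⟩
  have hSgen : MeasurableSpace.generateFrom (Set.range S) = mΩ' := by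
    rw [← hSrange]; exact MeasurableSpace.generateFrom_countableGeneratingSet
  have hSmeas : ∀ i, MeasurableSet (S i) := by
    intro i
    have hmem : S i ∈ Set.range S := ⟨i, rfl⟩
    rw [← hSgen]
    exact MeasurableSpace.measurableSet_generateFrom hmem
  obtain ⟨u, hu⟩ := exists_surjective_nat ((Σ n : ℕ, (Fin n → Bool)) × ℚ)
  set AS : (Σ n : ℕ, (Fin n → Bool)) → Set Ω' := fun j => AdaptedSel.bAtom S j.1 j.2 with hASdef
  have hASmeas : ∀ j, MeasurableSet (AS j) := fun j =>
    AdaptedSel.measurableSet_bAtom (fun i => hSmeas i) j.2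
  set HH : (Σ n : ℕ, (Fin n → Bool)) → ℝ → Ω' → ℝ := fun j => AdaptedSel.Hfun μ G (AS j) with hHHdef
  have hHHjoint : ∀ j, Measurable fun q : ℝ × Ω' => HH j q.1 q.2 := fun j =>
    AdaptedSel.Hfun_joint μ hG hGmono (hASmeas j)
  have hHHGt : ∀ j t, Measurable[G t] (HH j t) := fun j t =>
    AdaptedSel.Hfun_meas μ hGmono (AS j) t
  have hHHae : ∀ j t, HH j t =ᵐ[μ] AdaptedSel.mart μ G (AS j) t := fun j t =>
    AdaptedSel.Hfun_ae_eq μ hG hGmono (hASmeas j) t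
  set Cs : ℝ → ℕ → Set Ω' := fun t i => {x | ((u i).2 : ℝ) < HH (u i).1 t x} with hCsdef
  have hCsGt : ∀ t i, MeasurableSet[G t] (Cs t i) := fun t i => hHHGt _ t measurableSet_Ioi
  have hCsm : ∀ t i, MeasurableSet (Cs t i) := fun t i => hG t _ (hCsGt t i)
  have hHσle : ∀ t, MeasurableSpace.generateFrom (Set.range (Cs t)) ≤ mΩ' := fun t =>
    MeasurableSpace.generateFrom_le (by rintro s ⟨i, rfl⟩; exact hCsm t i)
  have hHHσ : ∀ j t, Measurable[MeasurableSpace.generateFrom (Set.range (Cs t))] (HH j t) := by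
    intro j t
    refine AdaptedSel.measurable_of_rat fun q => ?_
    obtain ⟨i, hi⟩ := hu (j, q)
    have hset : {x | (q:ℝ) < HH j t x} = Cs t i := by
      rw [hCsdef]; simp only [hi]
    rw [hset]
    exact MeasurableSpace.measurableSet_generateFrom ⟨i, rfl⟩
  -- W layer
  set W : ℝ → Ω → Ω' → ℝ := fun t ω => AdaptedSel.Wb μ S (X t ω) with hWdef
  have hW01 : ∀ t ω x, W t ω x ∈ Icc (0:ℝ) 1 := fun t ω x => AdaptedSel.Wb_mem_Icc μ S _ x
  have hWae : ∀ t ∈ Icc (0:ℝ) T, ∀ ω, (fun x => W t ω x) =ᵐ[μ] (X t ω : Ω' → ℝ) :=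
    fun t ht ω => AdaptedSel.Wb_ae_eq μ (fun i => hSmeas i) hSgen (X t ω) (hX01 t ht ω)
  have hWjoint : Measurable fun p : ℝ × Ω × Ω' => W p.1 p.2.1 p.2.2 :=
    AdaptedSel.Wb_meas_comp μ
      (hXmeas.comp_measurable (measurable_fst.prodMk (measurable_fst.comp measurable_snd)))
      (fun i => hSmeas i) (measurable_snd.comp measurable_snd)
  have hWm : ∀ t ω, Measurable (W t ω) := by
    intro t ω
    exact AdaptedSel.Wb_meas_comp μ stronglyMeasurable_const (fun i => hSmeas i) measurable_id
  have hWint : ∀ t ω, Integrable (W t ω) μ := fun t ω =>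
    AdaptedSel.int_bdd μ 1 (hWm t ω).aestronglyMeasurable
      (Eventually.of_forall fun x => AdaptedSel.abs_le_one_of_Icc (hW01 t ω x))
  -- sufficiency
  have hsuff : ∀ t, t ∈ Icc (0:ℝ) T → ∀ ω, ∃ g : Ω' → ℝ,
      Measurable[MeasurableSpace.generateFrom (Set.range (Cs t))] g ∧
        (X t ω : Ω' → ℝ) =ᵐ[μ] g := by
    intro t ht ω
    have hfi : Integrable (X t ω : Ω' → ℝ) μ := L1.integrable_coeFn (X t ω)
    have hf01 := hX01 t ht ω
    have hXGt := hXG t ht ω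
    replace hXGt : AEStronglyMeasurable[G t] (X t ω : Ω' → ℝ) μ := hXGt
    haveI : SigmaFinite (μ.trim (hG t)) := by
      haveI := isFiniteMeasure_trim (μ := μ) (hG t); infer_instance
    have hfix : μ[(X t ω : Ω' → ℝ)|G t] =ᵐ[μ] (X t ω : Ω' → ℝ) :=
      condExp_of_aestronglyMeasurable' (hG t) hXGt hfi
    set ζ : ℕ → Ω' → ℝ := fun n x =>
      ∑ β : Fin n → Bool,
        AdaptedSel.avgOn μ (AdaptedSel.bAtom S n β) (X t ω : Ω' → ℝ) * HH ⟨n, β⟩ t x with hζdef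
    have hζmeas : ∀ n, Measurable[MeasurableSpace.generateFrom (Set.range (Cs t))] (ζ n) := by
      intro n
      refine Finset.measurable_sum _ fun β _ => ?_
      exact (hHHσ ⟨n, β⟩ t).const_mul _
    have hζae : ∀ n, ζ n =ᵐ[μ] μ[AdaptedSel.cApp μ S n (X t ω : Ω' → ℝ)|G t] := by
      intro n
      have hterm : ∀ β : Fin n → Bool,
          (fun x => AdaptedSel.avgOn μ (AdaptedSel.bAtom S n β) (X t ω : Ω' → ℝ)
              * HH ⟨n, β⟩ t x) =ᵐ[μ]
            μ[fun x => (AdaptedSel.bAtom S n β).indicator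
              (fun _ => AdaptedSel.avgOn μ (AdaptedSel.bAtom S n β) (X t ω : Ω' → ℝ)) x|G t] := by
        intro β
        set c := AdaptedSel.avgOn μ (AdaptedSel.bAtom S n β) (X t ω : Ω' → ℝ) with hc
        have h1 : (fun x => (AdaptedSel.bAtom S n β).indicator (fun _ => c) x)
            = c • AdaptedSel.indA (AdaptedSel.bAtom S n β) := by
          funext x
          by_cases hx : x ∈ AdaptedSel.bAtom S n β <;>
            simp [AdaptedSel.indA, Set.indicator, hx]
        have h2 : μ[c • AdaptedSel.indA (AdaptedSel.bAtom S n β)|G t]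
            =ᵐ[μ] c • μ[AdaptedSel.indA (AdaptedSel.bAtom S n β)|G t] :=
          condExp_smul c (AdaptedSel.indA (AdaptedSel.bAtom S n β)) (G t)
        have h3 := hHHae ⟨n, β⟩ t
        rw [h1]
        refine EventuallyEq.symm (h2.trans ?_)
        filter_upwards [h3] with x hx
        simp only [Pi.smul_apply, smul_eq_mul]
        rw [hx]
        rfl
      have hsumrep : AdaptedSel.cApp μ S n (X t ω : Ω' → ℝ)
          = ∑ β : Fin n → Bool, (fun x => (AdaptedSel.bAtom S n β).indicator
              (fun _ => AdaptedSel.avgOn μ (AdaptedSel.bAtom S n β) (X t ω : Ω' → ℝ)) x) := by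
        funext x
        simp [AdaptedSel.cApp, Finset.sum_apply]
      have hint : ∀ β ∈ (Finset.univ : Finset (Fin n → Bool)),
          Integrable (fun x => (AdaptedSel.bAtom S n β).indicator
            (fun _ => AdaptedSel.avgOn μ (AdaptedSel.bAtom S n β) (X t ω : Ω' → ℝ)) x) μ :=
        fun β _ => (integrable_const _).indicator
          (AdaptedSel.measurableSet_bAtom (fun i => hSmeas i) β)
      have hcs := condExp_finsetSum (μ := μ) (m := G t) hint
      have hall := ae_all_iff.mpr hterm
      rw [hsumrep]
      refine EventuallyEq.trans ?_ hcs.symm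
      filter_upwards [hall] with x hx
      rw [hζdef]
      simp only [Finset.sum_apply]
      exact Finset.sum_congr rfl fun β _ => hx β
    obtain ⟨g0, hg0sm, hg0ae⟩ := Lp.aestronglyMeasurable (X t ω)
    have hg0' : StronglyMeasurable[MeasurableSpace.generateFrom (Set.range S)] g0 := by
      rw [hSgen]; exact hg0sm
    have htd := AdaptedSel.tendsto_cApp μ (fun i => hSmeas i) hfi hg0' hg0ae
    have hcb : ∀ n x, AdaptedSel.cApp μ S n (X t ω : Ω' → ℝ) x ∈ Icc (0:ℝ) 1 := fun n x =>
      AdaptedSel.cApp_mem_Icc μ hfi hf01 x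
    have hbnd : ∀ n, eLpNorm (ζ n - (X t ω : Ω' → ℝ)) 1 μ
        ≤ eLpNorm (AdaptedSel.cApp μ S n (X t ω : Ω' → ℝ) - (X t ω : Ω' → ℝ)) 1 μ := by
      intro n
      have h2 := condExp_sub (μ := μ) (m := G t)
        (AdaptedSel.integrable_cApp μ (C := S) (n := n) (f := (X t ω : Ω' → ℝ))
          (fun i => hSmeas i)) hfi
      have he1 : ζ n - (X t ω : Ω' → ℝ)
          =ᵐ[μ] μ[AdaptedSel.cApp μ S n (X t ω : Ω' → ℝ) - (X t ω : Ω' → ℝ)|G t] := by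
        refine EventuallyEq.trans ?_ h2.symm
        exact EventuallyEq.sub (hζae n) hfix.symm
      rw [eLpNorm_congr_ae he1]
      exact eLpNorm_one_condExp_le_eLpNorm _
    have hto0 : Tendsto
        (fun n => eLpNorm (AdaptedSel.cApp μ S n (X t ω : Ω' → ℝ) - (X t ω : Ω' → ℝ)) 1 μ)
        atTop (𝓝 0) := by
      have hcongr : ∀ n, eLpNorm (AdaptedSel.cApp μ S n (X t ω : Ω' → ℝ) - (X t ω : Ω' → ℝ)) 1 μ
          = eLpNorm (AdaptedSel.cApp μ S n (X t ω : Ω' → ℝ) - g0) 1 μ := fun n =>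
        eLpNorm_congr_ae (EventuallyEq.sub EventuallyEq.rfl hg0ae)
      simp_rw [hcongr, eLpNorm_one_eq_lintegral_enorm]
      have hg0meas : Measurable g0 := hg0sm.measurable
      have hFmeas : ∀ n, Measurable fun x =>
          (‖AdaptedSel.cApp μ S n (X t ω : Ω' → ℝ) x - g0 x‖₊ : ℝ≥0∞) := by
        intro n
        exact (((AdaptedSel.measurable_cApp μ (fun i : Fin n => hSmeas i)).sub
          hg0meas).nnnorm).coe_nnreal_ennreal
      have hg0b : ∀ᵐ x ∂μ, g0 x ∈ Icc (0:ℝ) 1 := by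
        filter_upwards [hf01, hg0ae] with x h1 h2
        rw [← h2]; exact h1
      have hbound : ∀ n, (fun x =>
          (‖AdaptedSel.cApp μ S n (X t ω : Ω' → ℝ) x - g0 x‖₊ : ℝ≥0∞)) ≤ᵐ[μ]
          fun _ => (2:ℝ≥0∞) := by
        intro n
        filter_upwards [hg0b] with x h1
        have hnorm : ‖AdaptedSel.cApp μ S n (X t ω : Ω' → ℝ) x - g0 x‖ ≤ (2:ℝ) := by
          rw [Real.norm_eq_abs]
          have hb1 := AdaptedSel.abs_le_one_of_Icc (hcb n x)
          have hb2 := AdaptedSel.abs_le_one_of_Icc h1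
          calc |AdaptedSel.cApp μ S n (X t ω : Ω' → ℝ) x - g0 x|
              ≤ |AdaptedSel.cApp μ S n (X t ω : Ω' → ℝ) x| + |g0 x| := abs_sub _ _
            _ ≤ 2 := by linarith
        calc (‖AdaptedSel.cApp μ S n (X t ω : Ω' → ℝ) x - g0 x‖₊ : ℝ≥0∞)
            = ENNReal.ofReal ‖AdaptedSel.cApp μ S n (X t ω : Ω' → ℝ) x - g0 x‖ :=
              (ofReal_norm _).symm
          _ ≤ ENNReal.ofReal 2 := ENNReal.ofReal_le_ofReal hnorm
          _ = 2 := by norm_num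
      have hlim : ∀ᵐ x ∂μ, Tendsto (fun n =>
          (‖AdaptedSel.cApp μ S n (X t ω : Ω' → ℝ) x - g0 x‖₊ : ℝ≥0∞)) atTop (𝓝 0) := by
        filter_upwards [htd, hg0ae] with x hx h2
        have h3 : Tendsto (fun n => AdaptedSel.cApp μ S n (X t ω : Ω' → ℝ) x - g0 x)
            atTop (𝓝 0) := by
          have h4 := hx.sub_const (g0 x)
          rw [h2, sub_self] at h4
          exact h4
        have h5 : Tendsto (fun n =>
            (‖AdaptedSel.cApp μ S n (X t ω : Ω' → ℝ) x - g0 x‖₊ : ℝ≥0)) atTop (𝓝 0) := by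
          have := (continuous_nnnorm.tendsto (0:ℝ)).comp h3
          simpa [Function.comp_def] using this
        have := (ENNReal.tendsto_coe (f := atTop)).mpr h5
        simpa using this
      have hDCT := tendsto_lintegral_of_dominated_convergence _ hFmeas hbound
        (by simp) hlim
      simpa [enorm_eq_nnnorm] using hDCT
    have hLp : Tendsto (fun n => eLpNorm (ζ n - (X t ω : Ω' → ℝ)) 1 μ) atTop (𝓝 0) :=
      tendsto_of_tendsto_of_tendsto_of_le_of_le tendsto_const_nhds hto0
        (fun n => zero_le) hbnd
    have hζasm : ∀ n, AEStronglyMeasurable (ζ n) μ := fun n =>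
      (((hζmeas n).mono (hHσle t) le_rfl).stronglyMeasurable).aestronglyMeasurable
    have htim := tendstoInMeasure_of_tendsto_eLpNorm (p := (1:ℝ≥0∞)) one_ne_zero hζasm
      (Lp.aestronglyMeasurable (X t ω)) hLp
    obtain ⟨ns, -, hns⟩ := htim.exists_seq_tendsto_ae
    refine ⟨fun x => AdaptedSel.eLimPt (fun k => AdaptedSel.clamp (ζ (ns k) x)), ?_, ?_⟩
    · exact AdaptedSel.eLimPt_meas fun k => AdaptedSel.measurable_clamp.comp (hζmeas (ns k))
    · filter_upwards [hns, hf01] with x hx h01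
      have hcl : Tendsto (fun k => AdaptedSel.clamp (ζ (ns k) x)) atTop
          (𝓝 (AdaptedSel.clamp ((X t ω : Ω' → ℝ) x))) :=
        (AdaptedSel.continuous_clamp.tendsto _).comp hx
      rw [AdaptedSel.clamp_of_mem h01] at hcl
      exact (AdaptedSel.eLimPt_of_tendsto h01.1 hcl).symm
  -- final process
  set Y : ℝ → Ω → Ω' → ℝ := fun t ω x =>
    AdaptedSel.eLimPt (fun n => AdaptedSel.clamp (AdaptedSel.cApp μ (Cs t) n (W t ω) x)) with hYdef
  have hEjoint : ∀ i : ℕ, MeasurableSet {p : ℝ × Ω × Ω' | p.2.2 ∈ Cs p.1 i} := by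
    intro i
    have hm : Measurable fun p : ℝ × Ω × Ω' => HH (u i).1 p.1 p.2.2 :=
      (hHHjoint (u i).1).comp (measurable_fst.prodMk (measurable_snd.comp measurable_snd))
    exact measurableSet_lt measurable_const hm
  have hEq2 : ∀ i : ℕ, MeasurableSet {q : (ℝ × Ω × Ω') × Ω' | q.2 ∈ Cs q.1.1 i} := by
    intro i
    have hm : Measurable fun q : (ℝ × Ω × Ω') × Ω' => HH (u i).1 q.1.1 q.2 :=
      (hHHjoint (u i).1).comp ((measurable_fst.comp measurable_fst).prodMk measurable_snd)
    exact measurableSet_lt measurable_const hm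
  refine ⟨Y, ?_, ?_, ?_, ?_⟩
  · intro t ω x
    exact AdaptedSel.eLimPt_mem_Icc fun n => (AdaptedSel.clamp_mem_Icc _).2
  · -- joint measurability
    refine AdaptedSel.eLimPt_meas fun n => ?_
    have hinner : Measurable fun p : ℝ × Ω × Ω' =>
        AdaptedSel.cApp μ (Cs p.1) n (W p.1 p.2.1) p.2.2 := ?_
    · exact AdaptedSel.measurable_clamp.comp hinner
    have heq : (fun p : ℝ × Ω × Ω' => AdaptedSel.cApp μ (Cs p.1) n (W p.1 p.2.1) p.2.2)
        = fun p => AdaptedSel.avgOn μ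
            (AdaptedSel.bAtom (Cs p.1) n (AdaptedSel.vFn (Cs p.1) n p.2.2)) (W p.1 p.2.1) :=
      funext fun p => AdaptedSel.cApp_eq μ _ n _ _
    rw [heq]
    refine AdaptedSel.measurable_cases
      (fun p : ℝ × Ω × Ω' => AdaptedSel.vFn (Cs p.1) n p.2.2) (Set.to_countable _) ?_
      (fun β p => AdaptedSel.avgOn μ (AdaptedSel.bAtom (Cs p.1) n β) (W p.1 p.2.1)) ?_
    · intro β
      have hset : (fun p : ℝ × Ω × Ω' => AdaptedSel.vFn (Cs p.1) n p.2.2) ⁻¹' {β}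
          = ⋂ i : Fin n, (if β i then {p : ℝ × Ω × Ω' | p.2.2 ∈ Cs p.1 i}
              else {p : ℝ × Ω × Ω' | p.2.2 ∈ Cs p.1 i}ᶜ) := by
        ext p
        rw [mem_preimage, mem_singleton_iff, ← AdaptedSel.mem_bAtom_iff]
        simp only [AdaptedSel.bAtom, mem_iInter]
        refine forall_congr' fun i => ?_
        by_cases hb : β i <;> simp [hb]
      rw [hset]
      refine MeasurableSet.iInter fun i => ?_
      by_cases hb : β i
      · simpa [hb] using hEjoint (i : ℕ)
      · simpa [hb] using (hEjoint (i : ℕ)).compl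
    · intro β
      have hEset : MeasurableSet {q : (ℝ × Ω × Ω') × Ω' | q.2 ∈ AdaptedSel.bAtom (Cs q.1.1) n β} := by
        have hrw : {q : (ℝ × Ω × Ω') × Ω' | q.2 ∈ AdaptedSel.bAtom (Cs q.1.1) n β}
            = ⋂ i : Fin n, (if β i then {q : (ℝ × Ω × Ω') × Ω' | q.2 ∈ Cs q.1.1 i}
                else {q : (ℝ × Ω × Ω') × Ω' | q.2 ∈ Cs q.1.1 i}ᶜ) := by
          ext q
          rw [mem_setOf_eq]
          simp only [AdaptedSel.bAtom, mem_iInter]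
          refine forall_congr' fun i => ?_
          by_cases hb : β i <;> simp [hb]
        rw [hrw]
        refine MeasurableSet.iInter fun i => ?_
        by_cases hb : β i
        · simpa [hb] using hEq2 (i : ℕ)
        · simpa [hb] using (hEq2 (i : ℕ)).compl
      have hW5 : Measurable fun q : (ℝ × Ω × Ω') × Ω' => W q.1.1 q.1.2.1 q.2 :=
        AdaptedSel.Wb_meas_comp μ
          (hXmeas.comp_measurable ((measurable_fst.comp measurable_fst).prodMk
            ((measurable_fst.comp measurable_snd).comp measurable_fst)))
          (fun i => hSmeas i) measurable_snd
      have hKsm : StronglyMeasurable fun q : (ℝ × Ω × Ω') × Ω' =>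
          Set.indicator {q' : (ℝ × Ω × Ω') × Ω' | q'.2 ∈ AdaptedSel.bAtom (Cs q'.1.1) n β}
            (fun _ => (1:ℝ)) q * W q.1.1 q.1.2.1 q.2 :=
        Measurable.stronglyMeasurable ((measurable_const.indicator hEset).mul hW5)
      have hnum : StronglyMeasurable fun p : ℝ × Ω × Ω' =>
          ∫ x, Set.indicator {q' : (ℝ × Ω × Ω') × Ω' | q'.2 ∈ AdaptedSel.bAtom (Cs q'.1.1) n β}
            (fun _ => (1:ℝ)) (p, x) * W p.1 p.2.1 x ∂μ :=
        hKsm.integral_prod_right'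
      have hnumeq : (fun p : ℝ × Ω × Ω' => ∫ x in AdaptedSel.bAtom (Cs p.1) n β, W p.1 p.2.1 x ∂μ)
          = fun p => ∫ x, Set.indicator
              {q' : (ℝ × Ω × Ω') × Ω' | q'.2 ∈ AdaptedSel.bAtom (Cs q'.1.1) n β}
              (fun _ => (1:ℝ)) (p, x) * W p.1 p.2.1 x ∂μ := by
        funext p
        rw [← integral_indicator (AdaptedSel.measurableSet_bAtom (fun i => hCsm p.1 i) β)]
        congr 1
        funext x
        by_cases hx : x ∈ AdaptedSel.bAtom (Cs p.1) n β
        · rw [Set.indicator_of_mem hx, Set.indicator_of_mem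
            (show (p, x) ∈ {q' : (ℝ × Ω × Ω') × Ω' | q'.2 ∈ AdaptedSel.bAtom (Cs q'.1.1) n β}
              from hx), one_mul]
        · rw [Set.indicator_of_notMem hx, Set.indicator_of_notMem
            (show (p, x) ∉ {q' : (ℝ × Ω × Ω') × Ω' | q'.2 ∈ AdaptedSel.bAtom (Cs q'.1.1) n β}
              from hx), zero_mul]
      have hden : Measurable fun p : ℝ × Ω × Ω' =>
          (μ (AdaptedSel.bAtom (Cs p.1) n β)).toReal := by
        have hmm := measurable_measure_prodMk_left (ν := μ) hEset
        exact hmm.ennreal_toReal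
      have hnum' : Measurable fun p : ℝ × Ω × Ω' =>
          ∫ x in AdaptedSel.bAtom (Cs p.1) n β, W p.1 p.2.1 x ∂μ := by
        rw [hnumeq]; exact hnum.measurable
      exact hnum'.div hden
  · -- adaptedness
    intro t ht
    refine AdaptedSel.eLimPt_meas fun n => ?_
    have hinner : Measurable[(F t).prod (G t)] fun p : Ω × Ω' =>
        AdaptedSel.cApp μ (Cs t) n (W t p.1) p.2 := ?_
    · exact AdaptedSel.measurable_clamp.comp hinner
    have heq : (fun p : Ω × Ω' => AdaptedSel.cApp μ (Cs t) n (W t p.1) p.2)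
        = fun p => AdaptedSel.avgOn μ (AdaptedSel.bAtom (Cs t) n (AdaptedSel.vFn (Cs t) n p.2))
            ((X t p.1 : Ω' → ℝ)) := by
      funext p
      rw [AdaptedSel.cApp_eq, AdaptedSel.avgOn_congr_ae μ (hWae t ht p.1)]
    rw [heq]
    refine AdaptedSel.measurable_cases (mα := (F t).prod (G t))
      (fun p : Ω × Ω' => AdaptedSel.vFn (Cs t) n p.2) (Set.to_countable _) ?_
      (fun β p => AdaptedSel.avgOn μ (AdaptedSel.bAtom (Cs t) n β) (X t p.1 : Ω' → ℝ)) ?_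
    · intro β
      have hset : (fun p : Ω × Ω' => AdaptedSel.vFn (Cs t) n p.2) ⁻¹' {β}
          = Prod.snd ⁻¹' (AdaptedSel.bAtom (Cs t) n β) := by
        ext p; simp [AdaptedSel.mem_bAtom_iff]
      rw [hset]
      exact (@measurable_snd Ω Ω' (F t) (G t))
        (AdaptedSel.measurableSet_bAtom (fun i => hCsGt t i) β)
    · intro β
      have h1 : Measurable[F t] fun ω => AdaptedSel.avgOn μ (AdaptedSel.bAtom (Cs t) n β)
          (X t ω : Ω' → ℝ) :=
        AdaptedSel.meas_avg_comp μ (hXadp t ht) _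
      exact h1.comp (@measurable_fst Ω Ω' (F t) (G t))
  · -- a.e. identification
    intro t ht ω
    have hWX := hWae t ht ω
    obtain ⟨g, hgHσ, hgae⟩ := hsuff t ht ω
    have hg' : StronglyMeasurable[MeasurableSpace.generateFrom (Set.range (Cs t))] g :=
      hgHσ.stronglyMeasurable
    have hWg : W t ω =ᵐ[μ] g := hWX.trans hgae
    have htd := AdaptedSel.tendsto_cApp μ (fun i => hCsm t i) (hWint t ω) hg' hWg
    filter_upwards [htd, hWX] with x hx h2
    have hcl : Tendsto (fun n => AdaptedSel.clamp (AdaptedSel.cApp μ (Cs t) n (W t ω) x)) atTop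
        (𝓝 (AdaptedSel.clamp (W t ω x))) := (AdaptedSel.continuous_clamp.tendsto _).comp hx
    rw [AdaptedSel.clamp_of_mem (hW01 t ω x)] at hcl
    exact (AdaptedSel.eLimPt_of_tendsto (hW01 t ω x).1 hcl).trans h2
end AdaptedSelection
end
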